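/- Duplication case: with M = N, φ = id_M, R₁ = R₂ = R and f = id_R, the submodule F ⋈ J = {(f', m) ∈ F × M : f' - m ∈ JM} of the duplication module M ⋈ J is a 2-absorbing submodule of M ⋈ J if and only if F is a 2-absorbing submodule of M. -/
import Mathlib

set_option synthInstance.maxHeartbeats 1000000
set_option maxHeartbeats 1000000

/-- A proper submodule `F` of an `R`-module `M` is 2-absorbing if whenever `a • b • m ∈ F`,
then `a * b ∈ (F :_R M)`, or `a • m ∈ F`, or `b • m ∈ F`. -/
def IsTwoAbsorbing {R M : Type*} [CommRing R] [AddCommGroup M] [Module R M]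
    (F : Submodule R M) : Prop :=
  F ≠ ⊤ ∧ ∀ a b : R, ∀ m : M, a • b • m ∈ F →
    a * b ∈ F.colon ⊤ ∨ a • m ∈ F ∨ b • m ∈ F

/-- `M × M` as an `(R × R)`-module, componentwise. -/
instance dupProdModule {R M : Type*} [CommRing R] [AddCommGroup M] [Module R M] :
    Module (R × R) (M × M) where
  smul p x := (p.1 • x.1, p.2 • x.2)
  one_smul x := by show ((1 : R × R).1 • x.1, (1 : R × R).2 • x.2) = x; simp
  mul_smul p q x := by
    show ((p * q).1 • x.1, (p * q).2 • x.2) =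
      (p.1 • (q.1 • x.1, q.2 • x.2).1, p.2 • (q.1 • x.1, q.2 • x.2).2)
    simp [mul_smul]
  smul_zero p := by
    show (p.1 • (0 : M × M).1, p.2 • (0 : M × M).2) = 0
    simp
  smul_add p x y := by
    show (p.1 • (x + y).1, p.2 • (x + y).2) =
      ((p.1 • x.1, p.2 • x.2) + (p.1 • y.1, p.2 • y.2) : M × M)
    simp [smul_add, Prod.add_def]
  add_smul p q x := by
    show ((p + q).1 • x.1, (p + q).2 • x.2) =
      ((p.1 • x.1, p.2 • x.2) + (q.1 • x.1, q.2 • x.2) : M × M)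
    simp [add_smul, Prod.add_def]
  zero_smul x := by show ((0 : R × R).1 • x.1, (0 : R × R).2 • x.2) = 0; simp

/-- The amalgamated duplication `R ⋈ J = {(r, r + j) : r ∈ R, j ∈ J}` of `R` along the
ideal `J`, as a subring of `R × R`. -/
def dupRing {R : Type*} [CommRing R] (J : Ideal R) : Subring (R × R) where
  carrier := {p | p.2 - p.1 ∈ J}
  add_mem' {p q} hp hq := by
    have h : (p + q).2 - (p + q).1 = (p.2 - p.1) + (q.2 - q.1) := by
      simp only [Prod.fst_add, Prod.snd_add]; ring
    rw [Set.mem_setOf_eq, h]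
    exact J.add_mem hp hq
  zero_mem' := by simp
  neg_mem' {p} hp := by
    have h : (-p).2 - (-p).1 = -(p.2 - p.1) := by
      simp only [Prod.fst_neg, Prod.snd_neg]; ring
    rw [Set.mem_setOf_eq, h]
    exact J.neg_mem hp
  one_mem' := by simp
  mul_mem' {p q} hp hq := by
    have h : (p * q).2 - (p * q).1 = p.2 * (q.2 - q.1) + (p.2 - p.1) * q.1 := by
      simp only [Prod.fst_mul, Prod.snd_mul]; ring
    rw [Set.mem_setOf_eq, h]
    exact J.add_mem (J.mul_mem_left p.2 hq) (J.mul_mem_right q.1 hp)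

/-- The duplication `M ⋈ J = {(m, m + n) : m ∈ M, n ∈ JM}` of the `R`-module `M` along
the ideal `J`, as an `(R ⋈ J)`-submodule of `M × M`. -/
def dupMod {R M : Type*} [CommRing R] [AddCommGroup M] [Module R M] (J : Ideal R) :
    Submodule (dupRing J) (M × M) where
  carrier := {p | p.2 - p.1 ∈ J • (⊤ : Submodule R M)}
  add_mem' {p q} hp hq := by
    have h : (p + q).2 - (p + q).1 = (p.2 - p.1) + (q.2 - q.1) := by
      simp only [Prod.fst_add, Prod.snd_add]; abel
    rw [Set.mem_setOf_eq, h]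
    exact Submodule.add_mem _ hp hq
  zero_mem' := by simp
  smul_mem' a p hp := by
    have key : (a • p : M × M).2 - (a • p : M × M).1 =
        (a : R × R).2 • (p.2 - p.1) + ((a : R × R).2 - (a : R × R).1) • p.1 := by
      show (a : R × R).2 • p.2 - (a : R × R).1 • p.1 = _
      module
    rw [Set.mem_setOf_eq, key]
    exact Submodule.add_mem _ (Submodule.smul_mem _ _ hp)
      (Submodule.smul_mem_smul a.2 trivial)

/-- For a submodule `F` of `M`, `F ⋈ J = {(m, m + n) : m ∈ F, n ∈ JM}` as an
`(R ⋈ J)`-submodule of the duplication module `M ⋈ J`. -/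
def dupSub {R M : Type*} [CommRing R] [AddCommGroup M] [Module R M] (J : Ideal R)
    (F : Submodule R M) : Submodule (dupRing J) (dupMod (M := M) J) where
  carrier := {p | (p : M × M).1 ∈ F}
  add_mem' {p q} hp hq := F.add_mem hp hq
  zero_mem' := F.zero_mem
  smul_mem' a p hp := F.smul_mem (a : R × R).1 hp


section Aux
variable {R M : Type*} [CommRing R] [AddCommGroup M] [Module R M] (J : Ideal R)

/-- Diagonal element of `dupRing`. -/
def diagR (r : R) : dupRing J := ⟨(r, r), show (r,r).2 - (r,r).1 ∈ J by simp⟩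

/-- Diagonal element of `dupMod`. -/
def diagM (m : M) : dupMod (M := M) J := ⟨(m, m), show (m,m).2 - (m,m).1 ∈ J • (⊤ : Submodule R M) by simp⟩

lemma dup_smul_fst (a : dupRing J) (x : dupMod (M := M) J) :
    ((a • x : dupMod (M := M) J) : M × M).1 = (a : R × R).1 • (x : M × M).1 := rfl

lemma mem_dupSub_iff (F : Submodule R M) (x : dupMod (M := M) J) :
    x ∈ dupSub J F ↔ ((x : M × M).1 ∈ F) := Iff.rfl

end Aux
/-- `F ⋈ J` is a 2-absorbing submodule of the duplication module `M ⋈ J` if and only if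
`F` is a 2-absorbing submodule of `M`. -/
theorem dupSub_isTwoAbsorbing_iff {R M : Type*} [CommRing R] [AddCommGroup M] [Module R M]
    (J : Ideal R) (F : Submodule R M) :
    IsTwoAbsorbing (dupSub J F) ↔ IsTwoAbsorbing F := by
  constructor
  · rintro ⟨hne, habs⟩
    constructor
    · intro hF
      apply hne
      rw [Submodule.eq_top_iff']
      intro x
      rw [mem_dupSub_iff]
      rw [hF]; trivial
    · intro a b m hab
      have h := habs (diagR J a) (diagR J b) (diagM J m) hab
      rcases h with h | h | h
      · left
        rw [Submodule.mem_colon] at h ⊢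
        intro p _
        have := h (diagM J p) trivial
        exact this
      · right; left; exact h
      · right; right; exact h
  · rintro ⟨hne, habs⟩
    constructor
    · intro hT
      apply hne
      rw [Submodule.eq_top_iff']
      intro m
      have : diagM J m ∈ dupSub J F := by rw [hT]; trivial
      exact this
    · intro a b x hab
      have h := habs (a : R × R).1 (b : R × R).1 (x : M × M).1 hab
      rcases h with h | h | h
      · left
        rw [Submodule.mem_colon] at h ⊢
        intro y _
        show ((a * b : dupRing J) : R × R).1 • (y : M × M).1 ∈ F
        exact h _ trivial
      · right; left; exact h
      · right; right; exact h
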